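/- Theorem 1: If T is a storage operator, then for every successor S, T is an S-storage operator. -/

import Mathlib

namespace SO

/-- Untyped λ-terms in de Bruijn notation (modulo α-equivalence). -/
inductive Term : Type
  | var : ℕ → Term
  | lam : Term → Term
  | app : Term → Term → Term
deriving DecidableEq

namespace Term

/-- Shift the free variables `≥ c` up by one. -/
def lift (c : ℕ) : Term → Term
  | var i => if i < c then var i else var (i + 1)
  | lam t => lam (lift (c + 1) t)
  | app t u => app (lift c t) (lift c u)

/-- Substitute `s` for the free variable `j`. -/
def subst (j : ℕ) (s : Term) : Term → Term
  | var i => if i = j then s else if j < i then var (i - 1) else var i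
  | lam t => lam (subst (j + 1) (lift 0 s) t)
  | app t u => app (subst j s t) (subst j s u)

/-- One step of β-reduction (anywhere in the term). -/
inductive Beta : Term → Term → Prop
  | beta : Beta (app (lam t) u) (subst 0 u t)
  | appL : Beta t t' → Beta (app t u) (app t' u)
  | appR : Beta u u' → Beta (app t u) (app t u')
  | lam : Beta t t' → Beta (lam t) (lam t')

/-- β-equivalence `u ≃β v`. -/
def BetaEq : Term → Term → Prop := Relation.EqvGen Beta

/-- One step of head reduction: a term `λx₁…λxₙ (λx u)v w̄` reduces its head redex. -/
inductive HeadStep : Term → Term → Prop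
  | beta : HeadStep (app (lam t) u) (subst 0 u t)
  | app : HeadStep (app t u) w → HeadStep (app (app t u) v) (app w v)
  | lam : HeadStep t t' → HeadStep (lam t) (lam t')

/-- `u ≻ v` : `v` is obtained from `u` by finitely many head-reduction steps. -/
def HeadRed : Term → Term → Prop := Relation.ReflTransGen HeadStep

/-- Head normal form: no head-reduction step applies. -/
def IsHNF (t : Term) : Prop := ∀ u, ¬ HeadStep t u

/-- `t` is solvable iff the head reduction of `t` terminates. -/
def Solvable (t : Term) : Prop := ∃ u, HeadRed t u ∧ IsHNF u

/-- `FreeIn k t` : the variable (de Bruijn index) `k` occurs free in `t`. -/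
def FreeIn (k : ℕ) : Term → Prop
  | var i => i = k
  | lam t => FreeIn (k + 1) t
  | app t u => FreeIn k t ∨ FreeIn k u

/-- A term is closed iff it has no free variables. -/
def Closed (t : Term) : Prop := ∀ k, ¬ FreeIn k t

/-- `(u)^n v` : `u` applied `n` times to `v`. -/
def iterApp (u : Term) : ℕ → Term → Term
  | 0, v => v
  | n + 1, v => app u (iterApp u n v)

/-- The Church integer `n̄ = λf λx (f)^n x`. -/
def church (n : ℕ) : Term := lam (lam (iterApp (var 1) n (var 0)))

/-- A closed λ-term `S` is a successor iff `(S)k̄ ≃β (k+1)‾` for every `k`. -/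
def IsSuccessor (S : Term) : Prop :=
  Closed S ∧ ∀ k : ℕ, BetaEq (app S (church k)) (church (k + 1))

/-- A closed λ-term `T` is a storage operator iff for every `n ≥ 0` there is a closed
`τₙ ≃β n̄` such that for every `θₙ ≃β n̄` and fresh variable `f`,
`(T)θₙ f ≻ (f)τₙ`. -/
def IsStorageOp (T : Term) : Prop :=
  Closed T ∧ ∀ n : ℕ, ∃ τ : Term, Closed τ ∧ BetaEq τ (church n) ∧
    ∀ (θ : Term) (f : ℕ), BetaEq θ (church n) → ¬ FreeIn f θ →
      HeadRed (app (app T θ) (var f)) (app (var f) τ)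

end Term

end SO

namespace SO

inductive XT : Type
  | var : ℕ → XT
  | const : ℕ → XT
  | lam : XT → XT
  | app : XT → XT → XT
  | cconst : ℕ → XT → XT → List XT → XT

namespace XT

mutual
/-- Shift the free variables `≥ c` up by one. -/
def lift (c : ℕ) : XT → XT
  | var i => if i < c then var i else var (i + 1)
  | const n => const n
  | lam t => lam (lift (c + 1) t)
  | app t u => app (lift c t) (lift c u)
  | cconst n a b cs => cconst n (lift c a) (lift c b) (liftList c cs)

def liftList (c : ℕ) : List XT → List XT
  | [] => []
  | t :: ts => lift c t :: liftList c ts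
end

mutual
def subst (j : ℕ) (s : XT) : XT → XT
  | var i => if i = j then s else if j < i then var (i - 1) else var i
  | const n => const n
  | lam t => lam (subst (j + 1) (lift 0 s) t)
  | app t u => app (subst j s t) (subst j s u)
  | cconst n a b cs => cconst n (subst j s a) (subst j s b) (substList j s cs)

def substList (j : ℕ) (s : XT) : List XT → List XT
  | [] => []
  | t :: ts => subst j s t :: substList j s ts
end

inductive HeadStep : XT → XT → Prop
  | beta : HeadStep (app (lam t) u) (subst 0 u t)
  | app : HeadStep (app t u) w → HeadStep (app (app t u) v) (app w v)
  | lam : HeadStep t t' → HeadStep (lam t) (lam t')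

def HeadRed : XT → XT → Prop := Relation.ReflTransGen HeadStep

/-- `(h) c₁ … cₖ` : `h` applied to the sequence `cs`. -/
def spine (h : XT) (cs : List XT) : XT := cs.foldl app h

end XT

/-- the canonical embedding of λ-terms into λX-terms -/
def Term.toXT : Term → XT
  | .var i => .var i
  | .lam t => .lam t.toXT
  | .app t u => .app t.toXT u.toXT

end SO

namespace SO

open Term

/-- A closed λ-term `T` is an `S`-storage operator iff for every `n ≥ 0` there is a
finite sequence of head reductions `{Uᵢ ≻ Vᵢ}₁≤i≤r` of λX-terms with:
`U₁ = (T)Xₙ f` and `V_r = (f)τₙ` for some closed `τₙ ≃β n̄`; for `i < r`,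
`Vᵢ = (Xₙ)a b c̄` or `Vᵢ = (X_{l,a,b,c̄})u v w̄` with `0 ≤ l ≤ n-1`; if `Vᵢ = (Xₙ)a b c̄`
then `U_{i+1} = (0̄)a b c̄` when `n = 0` and `U_{i+1} = ((S)X_{n-1,a,b,c̄})a b c̄` when
`n ≠ 0`; and if `Vᵢ = (X_{l,a,b,c̄})u v w̄` then `U_{i+1} = (0̄)u v w̄` when `l = 0` and
`U_{i+1} = ((S)X_{l-1,u,v,w̄})u v w̄` when `l ≠ 0`. -/
def IsSStorageOp (S T : Term) : Prop :=
  Closed T ∧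
  ∀ (n : ℕ) (f : ℕ), ∃ (r : ℕ) (U V : ℕ → XT) (τ : Term),
    1 ≤ r ∧ Closed τ ∧ BetaEq τ (church n) ∧
    U 1 = .app (.app T.toXT (.const n)) (.var f) ∧
    V r = .app (.var f) τ.toXT ∧
    (∀ i, 1 ≤ i → i ≤ r → XT.HeadRed (U i) (V i)) ∧
    (∀ i, 1 ≤ i → i < r →
      (∃ a b cs, V i = XT.spine (.app (.app (.const n) a) b) cs ∧
        (n = 0 → U (i + 1) = XT.spine (.app (.app (church 0).toXT a) b) cs) ∧
        ∀ m, n = m + 1 →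
          U (i + 1) = XT.spine (.app (.app (.app S.toXT (.cconst m a b cs)) a) b) cs)
      ∨
      (∃ l a b cs u v ws, l < n ∧
        V i = XT.spine (.app (.app (.cconst l a b cs) u) v) ws ∧
        (l = 0 → U (i + 1) = XT.spine (.app (.app (church 0).toXT u) v) ws) ∧
        ∀ m, l = m + 1 →
          U (i + 1) = XT.spine (.app (.app (.app S.toXT (.cconst m u v ws)) u) v) ws))

end SO
namespace SO
namespace Term

attribute [simp] lift subst

theorem lift_lift (t : Term) : ∀ c d, d ≤ c → lift d (lift c t) = lift (c+1) (lift d t) := by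
  induction t with
  | var i => intro c d h; simp only [lift]; split <;> split <;> simp only [lift] <;>
      (try split) <;> (try split) <;> first | rfl | omega
  | lam t ih => intro c d h; simp [lift, ih (c+1) (d+1) (by omega)]
  | app t u iht ihu => intro c d h; simp [lift, iht _ _ h, ihu _ _ h]

theorem subst_lift_cancel (t : Term) : ∀ j w, subst j w (lift j t) = t := by
  induction t with
  | var i => intro j w; simp only [lift, subst]; split <;> simp only [subst] <;>
      (try split) <;> (try split) <;> first | rfl | omega | (exfalso; omega)
  | lam t ih => intro j w; simp [lift, subst, ih]
  | app t u iht ihu => intro j w; simp [lift, subst, iht, ihu]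

theorem lift_subst (t : Term) : ∀ c j s, c ≤ j →
    lift c (subst j s t) = subst (j+1) (lift c s) (lift c t) := by
  induction t with
  | var i =>
    intro c j s h; simp only [subst, lift]
    rcases Nat.lt_trichotomy i j with hc | hc | hc
    · have h1 : ¬ i = j := by omega
      have h2 : ¬ j < i := by omega
      simp only [if_neg h1, if_neg h2]
      by_cases h3 : i < c
      · simp only [lift, if_pos h3, subst, if_neg (by omega : ¬ i = j+1), if_neg (by omega : ¬ j+1 < i), if_pos h3]
      · simp only [lift, if_neg h3, subst, if_neg (by omega : ¬ i+1 = j+1), if_neg (by omega : ¬ j+1 < i+1), if_neg h3]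
    · subst hc
      simp [lift, if_neg (by omega : ¬ i < c), subst]
    · simp only [if_neg (by omega : ¬ i = j), if_pos hc, lift,
        if_neg (by omega : ¬ i - 1 < c), if_neg (by omega : ¬ i < c), subst,
        if_neg (by omega : ¬ i + 1 = j + 1), if_pos (by omega : j+1 < i+1)]
      congr 1; omega
  | lam t ih =>
    intro c j s h
    simp only [subst, lift, ih (c+1) (j+1) (lift 0 s) (by omega)]
    rw [lift_lift s c 0 (by omega)]
  | app t u iht ihu => intro c j s h; simp [subst, lift, iht _ _ _ h, ihu _ _ _ h]

theorem subst_lift_of_le (t : Term) : ∀ c j s, j ≤ c →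
    lift c (subst j s t) = subst j (lift c s) (lift (c+1) t) := by
  induction t with
  | var i =>
    intro c j s h; simp only [subst, lift]
    rcases Nat.lt_trichotomy i j with hc | hc | hc
    · simp only [if_neg (by omega : ¬ i = j), if_neg (by omega : ¬ j < i), lift,
        if_pos (by omega : i < c), if_pos (by omega : i < c + 1), subst,
        if_neg (by omega : ¬ i = j), if_neg (by omega : ¬ j < i)]
    · subst hc
      simp [lift, if_pos (by omega : i < c+1), subst, h]
    · simp only [if_neg (by omega : ¬ i = j), if_pos hc]
      by_cases h3 : i - 1 < c
      · simp only [lift, if_pos h3, if_pos (by omega : i < c+1), subst,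
          if_neg (by omega : ¬ i = j), if_pos hc]
      · simp only [lift, if_neg h3, if_neg (by omega : ¬ i < c+1), subst,
          if_neg (by omega : ¬ i + 1 = j), if_pos (by omega : j < i + 1)]
        congr 1; omega
  | lam t ih =>
    intro c j s h
    simp only [subst, lift, ih (c+1) (j+1) (lift 0 s) (by omega)]
    rw [lift_lift s c 0 (by omega)]
  | app t u iht ihu => intro c j s h; simp [subst, lift, iht _ _ _ h, ihu _ _ _ h]

theorem subst_subst (t : Term) : ∀ i j s u, i ≤ j →
    subst j s (subst i u t) = subst i (subst j s u) (subst (j+1) (lift i s) t) := by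
  induction t with
  | var k =>
    intro i j s u h; simp only [subst]
    rcases Nat.lt_trichotomy k i with hc | hc | hc
    · simp only [if_neg (by omega : ¬ k = i), if_neg (by omega : ¬ i < k), subst,
        if_neg (by omega : ¬ k = j), if_neg (by omega : ¬ j < k),
        if_neg (by omega : ¬ k = j + 1), if_neg (by omega : ¬ j + 1 < k),
        if_neg (by omega : ¬ k = i), if_neg (by omega : ¬ i < k)]
    · subst hc
      simp [if_neg (by omega : ¬ k = j+1), if_neg (by omega : ¬ j+1 < k), subst]
    · rcases Nat.lt_trichotomy k (j+1) with hd | hd | hd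
      · simp only [if_neg (by omega : ¬ k = i), if_pos hc, subst,
          if_neg (by omega : ¬ k - 1 = j), if_neg (by omega : ¬ j < k - 1),
          if_neg (by omega : ¬ k = j + 1), if_neg (by omega : ¬ j + 1 < k),
          if_neg (by omega : ¬ k = i), if_pos hc]
      · subst hd
        simp [if_neg (by omega : ¬ j + 1 = i), if_pos hc, subst,
          (by omega : j + 1 - 1 = j), subst_lift_cancel, h]
      · simp only [if_neg (by omega : ¬ k = i), if_pos hc, subst,
          if_neg (by omega : ¬ k - 1 = j), if_pos (by omega : j < k - 1),
          if_neg (by omega : ¬ k = j + 1), if_pos hd,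
          if_neg (by omega : ¬ k - 1 = i), if_pos (by omega : i < k - 1)]
  | lam t ih =>
    intro i j s u h
    simp only [subst, ih (i+1) (j+1) (lift 0 s) (lift 0 u) (by omega)]
    rw [lift_subst u 0 j s (by omega), lift_lift s i 0 (by omega)]
  | app a b iha ihb => intro i j s u h; simp [subst, iha _ _ _ _ h, ihb _ _ _ _ h]

end Term
end SO
namespace SO
namespace Term

/-- Parallel reduction. -/
inductive Par : Term → Term → Prop
  | var : ∀ i, Par (var i) (var i)
  | lam : Par t t' → Par (lam t) (lam t')
  | app : Par t t' → Par u u' → Par (app t u) (app t' u')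
  | beta : Par t t' → Par u u' → Par (app (lam t) u) (subst 0 u' t')

theorem Par.refl : ∀ t, Par t t := by
  intro t; induction t with
  | var i => exact Par.var i
  | lam t ih => exact Par.lam ih
  | app t u iht ihu => exact Par.app iht ihu

theorem Beta.par {t u : Term} (h : Beta t u) : Par t u := by
  induction h with
  | beta => exact Par.beta (Par.refl _) (Par.refl _)
  | appL _ ih => exact Par.app ih (Par.refl _)
  | appR _ ih => exact Par.app (Par.refl _) ih
  | lam _ ih => exact Par.lam ih

def Betas : Term → Term → Prop := Relation.ReflTransGen Beta

theorem Betas.lam {t t' : Term} (h : Betas t t') : Betas (lam t) (lam t') :=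
  Relation.ReflTransGen.lift Term.lam (fun _ _ h => Beta.lam h) t t' h

theorem Betas.appL {t t' u : Term} (h : Betas t t') : Betas (app t u) (app t' u) :=
  Relation.ReflTransGen.lift (fun x => app x u) (fun _ _ h => Beta.appL h) t t' h

theorem Betas.appR {t u u' : Term} (h : Betas u u') : Betas (app t u) (app t u') :=
  Relation.ReflTransGen.lift (fun x => app t x) (fun _ _ h => Beta.appR h) u u' h

theorem Par.betas {t u : Term} (h : Par t u) : Betas t u := by
  induction h with
  | var i => exact Relation.ReflTransGen.refl
  | lam _ ih => exact Betas.lam ih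
  | app _ _ iht ihu => exact Relation.ReflTransGen.trans (Betas.appL iht) (Betas.appR ihu)
  | @beta t t' u u' _ _ iht ihu =>
    exact Relation.ReflTransGen.trans (Betas.appL (Betas.lam iht))
      (Relation.ReflTransGen.trans (Betas.appR ihu)
        (Relation.ReflTransGen.single Beta.beta))

theorem Par.lift_ {t t' : Term} (h : Par t t') : ∀ c, Par (lift c t) (lift c t') := by
  induction h with
  | var i => intro c; simp only [lift]; split <;> exact Par.refl _
  | lam _ ih => intro c; exact Par.lam (ih (c+1))
  | app _ _ iht ihu => intro c; exact Par.app (iht c) (ihu c)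
  | @beta t t' u u' _ _ iht ihu =>
    intro c
    have := Par.beta (iht (c+1)) (ihu c)
    simpa [lift, subst_lift_of_le t' c 0 u' (by omega)] using this

theorem Par.subst_ {t t' : Term} (h : Par t t') :
    ∀ j (s s' : Term), Par s s' → Par (subst j s t) (subst j s' t') := by
  induction h with
  | var i =>
    intro j s s' hs
    simp only [subst]
    split
    · exact hs
    · split <;> exact Par.refl _
  | lam _ ih => intro j s s' hs; exact Par.lam (ih (j+1) _ _ (hs.lift_ 0))
  | app _ _ iht ihu => intro j s s' hs; exact Par.app (iht j _ _ hs) (ihu j _ _ hs)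
  | @beta t t' u u' _ _ iht ihu =>
    intro j s s' hs
    have := Par.beta (iht (j+1) _ _ (hs.lift_ 0)) (ihu j _ _ hs)
    simpa [subst, subst_subst t' 0 j s' u' (by omega)] using this

/-- Complete development. -/
def cd : Term → Term
  | var i => var i
  | lam t => lam (cd t)
  | app (lam t) u => subst 0 (cd u) (cd t)
  | app (var i) u => app (var i) (cd u)
  | app (app a b) u => app (cd (app a b)) (cd u)

theorem Par.cd_ {t u : Term} (h : Par t u) : Par u (cd t) := by
  induction h with
  | var i => exact Par.refl _
  | lam _ ih => exact Par.lam ih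
  | @app t t' u u' ht hu iht ihu =>
    cases t with
    | var i => cases ht; exact Par.app iht ihu
    | app a b => exact Par.app iht ihu
    | lam t0 =>
      cases ht with
      | lam h0 =>
        simp only [cd]
        cases iht with
        | lam h1 => exact Par.beta h1 ihu
  | @beta t t' u u' _ _ iht ihu =>
    simp only [cd]
    exact iht.subst_ 0 _ _ ihu

theorem Par.diamond : ∀ t u v, Par t u → Par t v → ∃ w, Par u w ∧ Par v w :=
  fun t _ _ hu hv => ⟨cd t, hu.cd_, hv.cd_⟩

theorem betaEq_join {a b : Term} (h : BetaEq a b) :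
    ∃ c, Betas a c ∧ Betas b c := by
  have cr : ∀ x y z : Term, Par x y → Par x z →
      ∃ w, Relation.ReflGen Par y w ∧ Relation.ReflTransGen Par z w := by
    intro x y z hy hz
    obtain ⟨w, h1, h2⟩ := Par.diamond x y z hy hz
    exact ⟨w, Relation.ReflGen.single h1, Relation.ReflTransGen.single h2⟩
  have h' : Relation.EqvGen Par a b := Relation.EqvGen.mono (fun _ _ h => Beta.par h) a b h
  clear h
  have hequiv := Relation.equivalence_join_reflTransGen cr
  have hj : Relation.Join (Relation.ReflTransGen Par) a b := by
    induction h' with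
    | rel x y hxy => exact ⟨y, Relation.ReflTransGen.single hxy, Relation.ReflTransGen.refl⟩
    | refl x => exact hequiv.refl x
    | symm x y _ ih => exact hequiv.symm ih
    | trans x y z _ _ ih1 ih2 => exact hequiv.trans ih1 ih2
  obtain ⟨c, h1, h2⟩ := hj
  have sub : ∀ {x y : Term}, Relation.ReflTransGen Par x y → Betas x y := by
    intro x y h
    induction h with
    | refl => exact Relation.ReflTransGen.refl
    | tail _ hp ih => exact Relation.ReflTransGen.trans ih hp.betas
  exact ⟨c, sub h1, sub h2⟩

theorem Betas.of_lam {t : Term} : ∀ {z}, Betas (Term.lam t) z → ∃ t', z = Term.lam t' := by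
  intro z h
  induction h with
  | refl => exact ⟨t, rfl⟩
  | tail _ hstep ih =>
    obtain ⟨t', rfl⟩ := ih
    cases hstep with
    | lam h => exact ⟨_, rfl⟩

theorem Betas.of_fapp {f : ℕ} {τ : Term} : ∀ {z}, Betas (app (var f) τ) z →
    ∃ τ', z = app (var f) τ' := by
  intro z h
  induction h with
  | refl => exact ⟨τ, rfl⟩
  | tail _ hstep ih =>
    obtain ⟨τ', rfl⟩ := ih
    cases hstep with
    | appL h => cases h
    | appR h => exact ⟨_, rfl⟩

/-- The key separation: an abstraction is never β-equivalent to a term of the form `(f)τ`. -/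
theorem not_betaEq_lam_fapp {s τ : Term} {f : ℕ} : ¬ BetaEq (Term.lam s) (app (var f) τ) := by
  intro h
  obtain ⟨c, h1, h2⟩ := betaEq_join h
  obtain ⟨t', rfl⟩ := Betas.of_lam h1
  obtain ⟨τ', hτ⟩ := Betas.of_fapp h2
  exact Term.noConfusion hτ

end Term
end SO
namespace SO
namespace Term

theorem HeadStep.beta_ {t u : Term} (h : HeadStep t u) : Beta t u := by
  induction h with
  | beta => exact Beta.beta
  | app _ ih => exact Beta.appL ih
  | lam _ ih => exact Beta.lam ih

theorem HeadRed.betas {t u : Term} (h : HeadRed t u) : Betas t u :=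
  Relation.ReflTransGen.mono (fun _ _ h => HeadStep.beta_ h) t u h

theorem HeadRed.betaEq {t u : Term} (h : HeadRed t u) : BetaEq t u := by
  induction h with
  | refl => exact Relation.EqvGen.refl _
  | tail _ hstep ih => exact Relation.EqvGen.trans _ _ _ ih (Relation.EqvGen.rel _ _ hstep.beta_)

theorem HeadStep.det {t u v : Term} (h1 : HeadStep t u) (h2 : HeadStep t v) : u = v := by
  induction h1 generalizing v with
  | beta => cases h2 with
    | beta => rfl
  | app h ih => cases h2 with
    | app h' => rw [ih h']
  | lam h ih => cases h2 with
    | lam h' => rw [ih h']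

theorem HeadRed.hnf_dest {t u v : Term} (h1 : HeadRed t u) (h2 : HeadRed t v)
    (hv : IsHNF v) : HeadRed u v := by
  induction h1 using Relation.ReflTransGen.head_induction_on with
  | refl => exact h2
  | head hstep _ ih =>
    rcases Relation.ReflTransGen.cases_head h2 with rfl | ⟨c, hc, hcv⟩
    · exact absurd hstep (hv _)
    · rw [← HeadStep.det hstep hc] at hcv; exact ih hcv

theorem IsHNF.fapp (f : ℕ) (τ : Term) : IsHNF (app (var f) τ) := by
  intro u h
  cases h

theorem HeadRed.hnf_unique {t u v : Term} (h1 : HeadRed t u) (h2 : HeadRed t v)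
    (hu : IsHNF u) (hv : IsHNF v) : u = v := by
  have := HeadRed.hnf_dest h1 h2 hv
  rcases Relation.ReflTransGen.cases_head this with rfl | ⟨c, hc, _⟩
  · rfl
  · exact absurd hc (hu _)

theorem HeadRed.of_lam {t : Term} : ∀ {z}, HeadRed (Term.lam t) z → ∃ t', z = Term.lam t' := by
  intro z h
  induction h with
  | refl => exact ⟨t, rfl⟩
  | tail _ hstep ih =>
    obtain ⟨t', rfl⟩ := ih
    cases hstep with
    | lam _ => exact ⟨_, rfl⟩

/-- Step-counted head reduction. -/
inductive HRN : ℕ → Term → Term → Prop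
  | refl : ∀ t, HRN 0 t t
  | head : ∀ {k t u v}, HeadStep t u → HRN k u v → HRN (k+1) t v

theorem HRN.headRed {k : ℕ} {t u : Term} (h : HRN k t u) : HeadRed t u := by
  induction h with
  | refl t => exact Relation.ReflTransGen.refl
  | head hstep _ ih => exact Relation.ReflTransGen.head hstep ih

theorem HRN.tail {k : ℕ} {t u v : Term} (h : HRN k t u) (hs : HeadStep u v) :
    HRN (k+1) t v := by
  induction h with
  | refl t => exact HRN.head hs (HRN.refl _)
  | head h _ ih => exact HRN.head h (ih hs)

theorem HeadRed.hrn {t u : Term} (h : HeadRed t u) : ∃ k, HRN k t u := by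
  induction h with
  | refl => exact ⟨0, HRN.refl t⟩
  | tail _ hstep ih =>
    obtain ⟨k, hk⟩ := ih
    exact ⟨k+1, hk.tail hstep⟩


theorem HRN.cases' {k : ℕ} {t z : Term} (h : HRN k t z) :
    (k = 0 ∧ t = z) ∨ ∃ k' s, k = k' + 1 ∧ HeadStep t s ∧ HRN k' s z := by
  cases h with
  | refl => exact Or.inl ⟨rfl, rfl⟩
  | head hs ht => exact Or.inr ⟨_, _, rfl, hs, ht⟩

/-- Free-variable-based stability lemmas. -/
theorem lift_of_closed' {t : Term} : ∀ c, (∀ k, c ≤ k → ¬ FreeIn k t) → lift c t = t := by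
  induction t with
  | var i =>
    intro c h
    simp only [lift]
    rw [if_pos]
    by_contra h'
    exact h i (by omega) rfl
  | lam t ih =>
    intro c h
    simp only [lift]
    rw [ih (c+1) (fun k hk hf => h (k-1) (by omega) (by
      have : k - 1 + 1 = k := by omega
      simpa [FreeIn, this] using hf))]
  | app t u iht ihu =>
    intro c h
    simp only [lift]
    rw [iht c (fun k hk hf => h k hk (Or.inl hf)), ihu c (fun k hk hf => h k hk (Or.inr hf))]

theorem subst_of_closed' {t : Term} : ∀ j s, (∀ k, j ≤ k → ¬ FreeIn k t) → subst j s t = t := by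
  induction t with
  | var i =>
    intro j s h
    simp only [subst]
    rw [if_neg (fun h' => h i (by omega) rfl), if_neg]
    intro h'
    exact h i (by omega) rfl
  | lam t ih =>
    intro j s h
    simp only [subst]
    rw [ih (j+1) _ (fun k hk hf => h (k-1) (by omega) (by
      have : k - 1 + 1 = k := by omega
      simpa [FreeIn, this] using hf))]
  | app t u iht ihu =>
    intro j s h
    simp only [subst]
    rw [iht j s (fun k hk hf => h k hk (Or.inl hf)), ihu j s (fun k hk hf => h k hk (Or.inr hf))]

theorem Closed.lift_eq {t : Term} (h : Closed t) (c : ℕ) : lift c t = t :=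
  lift_of_closed' c (fun k _ => h k)

theorem Closed.subst_eq {t : Term} (h : Closed t) (j : ℕ) (s : Term) : subst j s t = t :=
  subst_of_closed' j s (fun k _ => h k)

theorem freeIn_iterApp {k n : ℕ} {u v : Term} (h : FreeIn k (iterApp u n v)) :
    FreeIn k u ∨ FreeIn k v := by
  induction n with
  | zero => exact Or.inr h
  | succ n ih =>
    rcases h with h | h
    · exact Or.inl h
    · exact ih h

theorem closed_church (n : ℕ) : Closed (church n) := by
  intro k h
  simp only [church, FreeIn] at h
  rcases freeIn_iterApp h with h | h <;> simp [FreeIn] at h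

theorem Closed.app {t u : Term} (ht : Closed t) (hu : Closed u) : Closed (Term.app t u) := by
  intro k h
  rcases h with h | h
  · exact ht k h
  · exact hu k h

/-- BetaEq congruence lemmas. -/
theorem BetaEq.appL {t t' u : Term} (h : BetaEq t t') : BetaEq (app t u) (app t' u) := by
  induction h with
  | rel x y hxy => exact Relation.EqvGen.rel _ _ (Beta.appL hxy)
  | refl x => exact Relation.EqvGen.refl _
  | symm x y _ ih => exact Relation.EqvGen.symm _ _ ih
  | trans x y z _ _ ih1 ih2 => exact Relation.EqvGen.trans _ _ _ ih1 ih2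

theorem BetaEq.appR {t u u' : Term} (h : BetaEq u u') : BetaEq (app t u) (app t u') := by
  induction h with
  | rel x y hxy => exact Relation.EqvGen.rel _ _ (Beta.appR hxy)
  | refl x => exact Relation.EqvGen.refl _
  | symm x y _ ih => exact Relation.EqvGen.symm _ _ ih
  | trans x y z _ _ ih1 ih2 => exact Relation.EqvGen.trans _ _ _ ih1 ih2

theorem BetaEq.rfl {t : Term} : BetaEq t t := Relation.EqvGen.refl t

theorem BetaEq.symm' {t u : Term} (h : BetaEq t u) : BetaEq u t := Relation.EqvGen.symm _ _ h

theorem BetaEq.trans' {t u v : Term} (h1 : BetaEq t u) (h2 : BetaEq u v) : BetaEq t v :=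
  Relation.EqvGen.trans _ _ _ h1 h2

/-- `church n` is a λ-abstraction, and `(church n) a` β-reduces to a λ-abstraction. -/
theorem church_app_betaEq_lam (n : ℕ) (a : Term) :
    ∃ s, BetaEq (app (church n) a) (Term.lam s) := by
  refine ⟨subst 1 (lift 0 a) (iterApp (var 1) n (var 0)), Relation.EqvGen.rel _ _ ?_⟩
  have h := @Beta.beta (Term.lam (iterApp (var 1) n (var 0))) a
  simpa [church, subst] using h


theorem headRed_foldl : ∀ (ws : List Term) {t u w : Term}, HeadStep (app t u) w →
    HeadRed (ws.foldl Term.app (app t u)) (ws.foldl Term.app w)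
  | [], _, _, _, h => Relation.ReflTransGen.single h
  | x :: ws, t, u, w, h =>
      headRed_foldl ws (HeadStep.app h)

end Term
end SO
namespace SO

namespace XT

/-- Interpretation of λX-terms into λ-terms: constants of level `l` are sent to `g l`. -/
def interp (g : ℕ → Term) : XT → Term
  | .var i => .var i
  | .const n => g n
  | .lam t => .lam (interp g t)
  | .app t u => .app (interp g t) (interp g u)
  | .cconst l _ _ _ => g l

theorem interp_lift {g : ℕ → Term} (hg : ∀ l, Term.Closed (g l)) :
    ∀ (t : XT) (c : ℕ), interp g (XT.lift c t) = Term.lift c (interp g t)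
  | .var i, c => by simp only [XT.lift, interp, Term.lift]; split <;> simp [interp]
  | .const n, c => by simp only [XT.lift, interp]; rw [(hg n).lift_eq]
  | .lam t, c => by simp only [XT.lift, interp, Term.lift, interp_lift hg t (c+1)]
  | .app t u, c => by
      simp only [XT.lift, interp, Term.lift, interp_lift hg t c, interp_lift hg u c]
  | .cconst l a b cs, c => by simp only [XT.lift, interp]; rw [(hg l).lift_eq]

theorem interp_subst {g : ℕ → Term} (hg : ∀ l, Term.Closed (g l)) :
    ∀ (t : XT) (j : ℕ) (s : XT),
      interp g (XT.subst j s t) = Term.subst j (interp g s) (interp g t)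
  | .var i, j, s => by
      simp only [XT.subst, interp, Term.subst]
      split
      · rfl
      · split <;> simp [interp]
  | .const n, j, s => by simp only [XT.subst, interp]; rw [(hg n).subst_eq]
  | .lam t, j, s => by
      simp only [XT.subst, interp, Term.subst, interp_subst hg t (j+1) (XT.lift 0 s),
        interp_lift hg s 0]
  | .app t u, j, s => by
      simp only [XT.subst, interp, Term.subst, interp_subst hg t j s, interp_subst hg u j s]
  | .cconst l a b cs, j, s => by simp only [XT.subst, interp]; rw [(hg l).subst_eq]

theorem interp_headStep {g : ℕ → Term} (hg : ∀ l, Term.Closed (g l)) {W W' : XT}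
    (h : XT.HeadStep W W') : Term.HeadStep (interp g W) (interp g W') := by
  induction h with
  | @beta t u =>
    have := @Term.HeadStep.beta (interp g t) (interp g u)
    rw [interp_subst hg t 0 u]
    exact this
  | app _ ih => exact Term.HeadStep.app ih
  | lam _ ih => exact Term.HeadStep.lam ih

theorem interp_headRed {g : ℕ → Term} (hg : ∀ l, Term.Closed (g l)) {W W' : XT}
    (h : XT.HeadRed W W') : Term.HeadRed (interp g W) (interp g W') :=
  Relation.ReflTransGen.lift (interp g) (fun _ _ h => interp_headStep hg h) W W' h

-- Levels discipline: every plain constant has level `n`, every created constant has level `< n`.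
mutual
def OKc (n : ℕ) : XT → Prop
  | .var _ => True
  | .const m => m = n
  | .lam t => OKc n t
  | .app t u => OKc n t ∧ OKc n u
  | .cconst l a b cs => l < n ∧ OKc n a ∧ OKc n b ∧ OKcL n cs

def OKcL (n : ℕ) : List XT → Prop
  | [] => True
  | t :: ts => OKc n t ∧ OKcL n ts
end

mutual
theorem okc_lift {n : ℕ} : ∀ (t : XT) (c : ℕ), OKc n t → OKc n (XT.lift c t)
  | .var i, c, _ => by simp only [XT.lift]; split <;> trivial
  | .const m, c, h => h
  | .lam t, c, h => okc_lift t (c+1) h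
  | .app t u, c, h => ⟨okc_lift t c h.1, okc_lift u c h.2⟩
  | .cconst l a b cs, c, h =>
      ⟨h.1, okc_lift a c h.2.1, okc_lift b c h.2.2.1, okcL_lift cs c h.2.2.2⟩

theorem okcL_lift {n : ℕ} : ∀ (ts : List XT) (c : ℕ), OKcL n ts → OKcL n (XT.liftList c ts)
  | [], _, _ => trivial
  | t :: ts, c, h => ⟨okc_lift t c h.1, okcL_lift ts c h.2⟩
end

mutual
theorem okc_subst {n : ℕ} : ∀ (t : XT) (j : ℕ) (s : XT), OKc n t → OKc n s →
    OKc n (XT.subst j s t)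
  | .var i, j, s, _, hs => by
      simp only [XT.subst]
      split
      · exact hs
      · split <;> trivial
  | .const m, j, s, h, _ => h
  | .lam t, j, s, h, hs => okc_subst t (j+1) (XT.lift 0 s) h (okc_lift s 0 hs)
  | .app t u, j, s, h, hs => ⟨okc_subst t j s h.1 hs, okc_subst u j s h.2 hs⟩
  | .cconst l a b cs, j, s, h, hs =>
      ⟨h.1, okc_subst a j s h.2.1 hs, okc_subst b j s h.2.2.1 hs,
        okcL_subst cs j s h.2.2.2 hs⟩

theorem okcL_subst {n : ℕ} : ∀ (ts : List XT) (j : ℕ) (s : XT), OKcL n ts → OKc n s →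
    OKcL n (XT.substList j s ts)
  | [], _, _, _, _ => trivial
  | t :: ts, j, s, h, hs => ⟨okc_subst t j s h.1 hs, okcL_subst ts j s h.2 hs⟩
end

theorem okc_headStep {n : ℕ} {W W' : XT} (h : XT.HeadStep W W') (hW : OKc n W) : OKc n W' := by
  induction h with
  | @beta t u => exact okc_subst t 0 u hW.1 hW.2
  | app _ ih => exact ⟨ih hW.1, hW.2⟩
  | lam _ ih => exact ih hW

theorem okc_headRed {n : ℕ} {W W' : XT} (h : XT.HeadRed W W') (hW : OKc n W) : OKc n W' := by
  induction h with
  | refl => exact hW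
  | tail _ hstep ih => exact okc_headStep hstep ih

/-- Spine lemmas. -/
theorem spine_nil (h : XT) : spine h [] = h := rfl

theorem spine_cons (h : XT) (a : XT) (cs : List XT) :
    spine h (a :: cs) = spine (XT.app h a) cs := rfl

theorem okc_spine {n : ℕ} : ∀ (cs : List XT) (h : XT), OKc n (spine h cs) ↔ OKc n h ∧ OKcL n cs
  | [], h => by simp [spine_nil, OKcL]
  | a :: cs, h => by
      rw [spine_cons, okc_spine cs (XT.app h a)]
      show (OKc n h ∧ OKc n a) ∧ OKcL n cs ↔ _
      show _ ↔ OKc n h ∧ OKc n a ∧ OKcL n cs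
      tauto

theorem spine_app_ex : ∀ (cs : List XT) (x y : XT), ∃ p q, spine (XT.app x y) cs = XT.app p q
  | [], x, y => ⟨x, y, rfl⟩
  | a :: cs, x, y => spine_app_ex cs (XT.app x y) a

def lhead : XT → XT
  | .app t _ => lhead t
  | t => t

theorem lhead_spine : ∀ (cs : List XT) (h : XT), lhead (spine h cs) = lhead h
  | [], h => rfl
  | a :: cs, h => by rw [spine_cons, lhead_spine cs (XT.app h a)]; rfl

theorem interp_spine (g : ℕ → Term) : ∀ (cs : List XT) (h : XT),
    interp g (spine h cs) = (cs.map (interp g)).foldl Term.app (interp g h)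
  | [], h => rfl
  | a :: cs, h => by rw [spine_cons, interp_spine g cs (XT.app h a)]; rfl

end XT

theorem interp_toXT (g : ℕ → Term) : ∀ t : Term, XT.interp g t.toXT = t
  | .var i => rfl
  | .lam t => by simp [Term.toXT, XT.interp, interp_toXT g t]
  | .app t u => by simp [Term.toXT, XT.interp, interp_toXT g t, interp_toXT g u]

theorem okc_toXT (n : ℕ) : ∀ t : Term, XT.OKc n t.toXT
  | .var i => trivial
  | .lam t => okc_toXT n t
  | .app t u => ⟨okc_toXT n t, okc_toXT n u⟩

theorem lhead_toXT : ∀ t : Term,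
    (∃ i, XT.lhead t.toXT = XT.var i) ∨ (∃ u, XT.lhead t.toXT = XT.lam u)
  | .var i => Or.inl ⟨i, rfl⟩
  | .lam t => Or.inr ⟨t.toXT, rfl⟩
  | .app t u => lhead_toXT t

end SO
namespace SO

open Term

/-- The canonical θ-terms: `gchain S b l = (S)ˡ b`. -/
def gchain (S b : Term) : ℕ → Term
  | 0 => b
  | l + 1 => Term.app S (gchain S b l)

theorem gchain_closed {S b : Term} (hS : Closed S) (hb : Closed b) :
    ∀ l, Closed (gchain S b l)
  | 0 => hb
  | l + 1 => Closed.app hS (gchain_closed hS hb l)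

theorem gchain_betaEq {S b : Term} (hS : IsSuccessor S) (hb : BetaEq b (church 0)) :
    ∀ l, BetaEq (gchain S b l) (church l)
  | 0 => hb
  | l + 1 => BetaEq.trans' (BetaEq.appR (gchain_betaEq hS hb l)) (hS.2 l)

theorem gchain_ne {S b₁ b₂ : Term} (hb : b₁ ≠ b₂) : ∀ l, gchain S b₁ l ≠ gchain S b₂ l
  | 0 => hb
  | l + 1 => by
      intro h
      exact gchain_ne hb l (by injection h)

namespace XT

theorem eq_toXT_of_interp_eq {g₁ g₂ : ℕ → Term} (hne : ∀ l, g₁ l ≠ g₂ l) :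
    ∀ t : XT, interp g₁ t = interp g₂ t → ∃ s : Term, t = s.toXT
  | .var i, _ => ⟨Term.var i, rfl⟩
  | .const m, h => absurd h (hne m)
  | .lam t, h => by
      obtain ⟨s, hs⟩ := eq_toXT_of_interp_eq hne t (by injection h)
      exact ⟨Term.lam s, by rw [hs]; rfl⟩
  | .app t u, h => by
      obtain ⟨s, hs⟩ := eq_toXT_of_interp_eq hne t (by injection h)
      obtain ⟨s', hs'⟩ := eq_toXT_of_interp_eq hne u (by injection h)
      exact ⟨Term.app s s', by rw [hs, hs']; rfl⟩
  | .cconst l a b cs, h => absurd h (hne l)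

theorem spine_snoc (h : XT) (cs : List XT) (x : XT) :
    spine h (cs ++ [x]) = XT.app (spine h cs) x := by
  simp [spine, List.foldl_append]

/-- Reverse simulation: a head step of `interp g W` lifts to a head step of `W`,
unless `W` is an abstraction or a constant-headed spine. -/
theorem revsim {g : ℕ → Term} (hg : ∀ l, Term.Closed (g l)) :
    ∀ (W : XT) (s : Term), Term.HeadStep (interp g W) s →
      (∃ W', XT.HeadStep W W' ∧ interp g W' = s) ∨
      (∃ w, W = XT.lam w) ∨
      (∃ h cs, W = XT.spine h cs ∧
        ((∃ m, h = XT.const m) ∨ ∃ l a b c, h = XT.cconst l a b c))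
  | .var i, s, h => by cases h
  | .const m, s, h => Or.inr (Or.inr ⟨.const m, [], rfl, Or.inl ⟨m, rfl⟩⟩)
  | .cconst l a b c, s, h => Or.inr (Or.inr ⟨.cconst l a b c, [], rfl, Or.inr ⟨l, a, b, c, rfl⟩⟩)
  | .lam w, s, h => Or.inr (Or.inl ⟨w, rfl⟩)
  | .app (.var i) W₂, s, h => by cases h
  | .app (.const m) W₂, s, h =>
      Or.inr (Or.inr ⟨.const m, [W₂], rfl, Or.inl ⟨m, rfl⟩⟩)
  | .app (.cconst l a b c) W₂, s, h =>
      Or.inr (Or.inr ⟨.cconst l a b c, [W₂], rfl, Or.inr ⟨l, a, b, c, rfl⟩⟩)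
  | .app (.lam w₁) W₂, s, h => by
      cases h with
      | beta =>
        exact Or.inl ⟨XT.subst 0 W₂ w₁, XT.HeadStep.beta, (interp_subst hg w₁ 0 W₂).symm ▸ rfl⟩
  | .app (.app A B) W₂, s, h => by
      cases h with
      | @app _ _ w _ hstep =>
        rcases revsim hg (XT.app A B) w hstep with ⟨W', hs, heq⟩ | ⟨w', hw⟩ | ⟨hh, cs, heq, hcase⟩
        · exact Or.inl ⟨XT.app W' W₂, XT.HeadStep.app hs, by simp [interp, heq]⟩
        · exact absurd hw (by simp)
        · exact Or.inr (Or.inr ⟨hh, cs ++ [W₂], by rw [spine_snoc, ← heq], hcase⟩)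

/-- The chain of reductions of the `S`-machine. -/
inductive Ch (Sx : XT) (n f : ℕ) : XT → XT → Prop
  | done (W t') : XT.HeadRed W (XT.app (XT.var f) t') → Ch Sx n f W t'
  | stepN (W a b cs U₂ t') :
      XT.HeadRed W (XT.spine (XT.app (XT.app (XT.const n) a) b) cs) →
      (n = 0 → U₂ = XT.spine (XT.app (XT.app (Term.church 0).toXT a) b) cs) →
      (∀ m, n = m + 1 →
        U₂ = XT.spine (XT.app (XT.app (XT.app Sx (XT.cconst m a b cs)) a) b) cs) →
      Ch Sx n f U₂ t' → Ch Sx n f W t'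
  | stepC (W l a b cs u v ws U₂ t') :
      l < n →
      XT.HeadRed W (XT.spine (XT.app (XT.app (XT.cconst l a b cs) u) v) ws) →
      (l = 0 → U₂ = XT.spine (XT.app (XT.app (Term.church 0).toXT u) v) ws) →
      (∀ m, l = m + 1 →
        U₂ = XT.spine (XT.app (XT.app (XT.app Sx (XT.cconst m u v ws)) u) v) ws) →
      Ch Sx n f U₂ t' → Ch Sx n f W t'

theorem Ch.prepend {Sx : XT} {n f : ℕ} {W W' t' : XT} (h : XT.HeadStep W W')
    (hc : Ch Sx n f W' t') : Ch Sx n f W t' := by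
  cases hc with
  | done _ _ hred => exact Ch.done _ _ (Relation.ReflTransGen.head h hred)
  | stepN _ a b cs U₂ _ hred h0 hs hch =>
    exact Ch.stepN _ a b cs U₂ _ (Relation.ReflTransGen.head h hred) h0 hs hch
  | stepC _ l a b cs u v ws U₂ _ hl hred h0 hs hch =>
    exact Ch.stepC _ l a b cs u v ws U₂ _ hl (Relation.ReflTransGen.head h hred) h0 hs hch

/-- The λ-image of a chain under any admissible interpretation is a head reduction. -/
theorem Ch.interp_red {S : Term} {n f : ℕ} {g : ℕ → Term} (hg : ∀ l, Term.Closed (g l))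
    (hsucc : ∀ m, g (m + 1) = Term.app S (g m))
    (hg0 : ∀ (u v : Term) (ws : List Term),
      Term.HeadRed (ws.foldl Term.app (Term.app (Term.app (g 0) u) v))
        (ws.foldl Term.app (Term.app (Term.app (church 0) u) v))) :
    ∀ {W t' : XT}, Ch S.toXT n f W t' →
      Term.HeadRed (interp g W) (Term.app (Term.var f) (interp g t')) := by
  intro W t' h
  induction h with
  | done W t' hred => exact interp_headRed hg hred
  | stepN W a b cs U₂ t' hred h0 hs _ ih =>
    refine Relation.ReflTransGen.trans (interp_headRed hg hred) ?_
    refine Relation.ReflTransGen.trans ?_ ih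
    rw [interp_spine]
    cases n with
    | zero =>
      rw [h0 rfl, interp_spine]
      simpa [interp, interp_toXT, Term.HeadRed] using hg0 (interp g a) (interp g b) ((cs.map (interp g)))
    | succ m =>
      rw [hs m rfl, interp_spine]
      simp only [interp, interp_toXT, hsucc m, List.map]
      exact Relation.ReflTransGen.refl
  | stepC W l a b cs u v ws U₂ t' hl hred h0 hs _ ih =>
    refine Relation.ReflTransGen.trans (interp_headRed hg hred) ?_
    refine Relation.ReflTransGen.trans ?_ ih
    rw [interp_spine]
    cases l with
    | zero =>
      rw [h0 rfl, interp_spine]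
      simpa [interp, interp_toXT, Term.HeadRed] using hg0 (interp g u) (interp g v) ((ws.map (interp g)))
    | succ m =>
      rw [hs m rfl, interp_spine]
      simp only [interp, interp_toXT, hsucc m, List.map]
      exact Relation.ReflTransGen.refl

end XT

end SO
namespace SO
namespace XT

open Term

/-- A chain yields the indexed family of head reductions required by `IsSStorageOp`. -/
theorem Ch.toIndexed {S : Term} {n f : ℕ} :
    ∀ {W t' : XT}, Ch S.toXT n f W t' →
    ∃ (r : ℕ) (U V : ℕ → XT),
      1 ≤ r ∧ U 1 = W ∧ V r = XT.app (XT.var f) t' ∧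
      (∀ i, 1 ≤ i → i ≤ r → XT.HeadRed (U i) (V i)) ∧
      (∀ i, 1 ≤ i → i < r →
        (∃ a b cs, V i = XT.spine (.app (.app (.const n) a) b) cs ∧
          (n = 0 → U (i + 1) = XT.spine (.app (.app (church 0).toXT a) b) cs) ∧
          ∀ m, n = m + 1 →
            U (i + 1) = XT.spine (.app (.app (.app S.toXT (.cconst m a b cs)) a) b) cs)
        ∨
        (∃ l a b cs u v ws, l < n ∧
          V i = XT.spine (.app (.app (.cconst l a b cs) u) v) ws ∧
          (l = 0 → U (i + 1) = XT.spine (.app (.app (church 0).toXT u) v) ws) ∧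
          ∀ m, l = m + 1 →
            U (i + 1) = XT.spine (.app (.app (.app S.toXT (.cconst m u v ws)) u) v) ws)) := by
  intro W t' h
  induction h with
  | done W t' hred =>
    refine ⟨1, fun _ => W, fun _ => XT.app (XT.var f) t', le_refl 1, rfl, rfl, ?_, ?_⟩
    · intro i _ _; exact hred
    · intro i h1 h2; omega
  | stepN W a b cs U₂ t' hred h0 hs _ ih =>
    obtain ⟨r, U, V, hr, hU1, hVr, hhr, hsh⟩ := ih
    refine ⟨r + 1, fun i => if i = 1 then W else U (i - 1),
      fun i => if i = 1 then XT.spine (.app (.app (.const n) a) b) cs else V (i - 1),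
      by omega, by simp, ?_, ?_, ?_⟩
    · dsimp only; rw [if_neg (by omega)]; simpa using hVr
    · intro i hi1 hir
      dsimp only
      by_cases hone : i = 1
      · subst hone; simpa using hred
      · rw [if_neg hone, if_neg hone]
        exact hhr (i - 1) (by omega) (by omega)
    · intro i hi1 hir
      dsimp only
      by_cases hone : i = 1
      · subst hone
        refine Or.inl ⟨a, b, cs, by simp, ?_, ?_⟩
        · intro hn; rw [if_neg (by omega : ¬ (1+1) = 1), show 1 + 1 - 1 = 1 from rfl, hU1]; exact h0 hn
        · intro m hm; rw [if_neg (by omega : ¬ (1+1) = 1), show 1 + 1 - 1 = 1 from rfl, hU1]; exact hs m hm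
      · have := hsh (i - 1) (by omega) (by omega)
        rw [if_neg hone, if_neg (by omega : ¬ i + 1 = 1)]
        have heq : i - 1 + 1 = i + 1 - 1 := by omega
        rw [heq] at this
        exact this
  | stepC W l a b cs u v ws U₂ t' hl hred h0 hs _ ih =>
    obtain ⟨r, U, V, hr, hU1, hVr, hhr, hsh⟩ := ih
    refine ⟨r + 1, fun i => if i = 1 then W else U (i - 1),
      fun i => if i = 1 then XT.spine (.app (.app (.cconst l a b cs) u) v) ws else V (i - 1),
      by omega, by simp, ?_, ?_, ?_⟩
    · dsimp only; rw [if_neg (by omega)]; simpa using hVr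
    · intro i hi1 hir
      dsimp only
      by_cases hone : i = 1
      · subst hone; simpa using hred
      · rw [if_neg hone, if_neg hone]
        exact hhr (i - 1) (by omega) (by omega)
    · intro i hi1 hir
      dsimp only
      by_cases hone : i = 1
      · subst hone
        refine Or.inr ⟨l, a, b, cs, u, v, ws, hl, by simp, ?_, ?_⟩
        · intro hn; rw [if_neg (by omega : ¬ (1+1) = 1), show 1 + 1 - 1 = 1 from rfl, hU1]; exact h0 hn
        · intro m hm; rw [if_neg (by omega : ¬ (1+1) = 1), show 1 + 1 - 1 = 1 from rfl, hU1]; exact hs m hm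
      · have := hsh (i - 1) (by omega) (by omega)
        rw [if_neg hone, if_neg (by omega : ¬ i + 1 = 1)]
        have heq : i - 1 + 1 = i + 1 - 1 := by omega
        rw [heq] at this
        exact this

end XT
end SO
namespace SO

open Term XT

theorem church_eq_lam (l : ℕ) :
    church l = Term.lam (Term.lam (iterApp (Term.var 1) l (Term.var 0))) := rfl

theorem not_headRed_zero {gl τ : Term} {lvl f : ℕ} (hb : BetaEq gl (church lvl)) :
    ¬ Term.HeadRed gl (Term.app (Term.var f) τ) := by
  intro h
  refine not_betaEq_lam_fapp (s := Term.lam (iterApp (Term.var 1) lvl (Term.var 0))) (f := f) (τ := τ) ?_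
  rw [← church_eq_lam]
  exact BetaEq.trans' (BetaEq.symm' hb) h.betaEq

theorem not_headRed_one {gl τ a : Term} {lvl f : ℕ} (hb : BetaEq gl (church lvl)) :
    ¬ Term.HeadRed (Term.app gl a) (Term.app (Term.var f) τ) := by
  intro h
  obtain ⟨s, hs⟩ := church_app_betaEq_lam lvl a
  refine not_betaEq_lam_fapp (s := s) (f := f) (τ := τ) ?_
  refine BetaEq.trans' (BetaEq.symm' hs) ?_
  exact BetaEq.trans' (BetaEq.symm' (BetaEq.appL hb)) h.betaEq

theorem terminal_case {g : ℕ → Term} (hgc : ∀ l, Term.Closed (g l)) {W : XT} {f : ℕ} {τ : Term}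
    (hterm : XT.interp g W = Term.app (Term.var f) τ) :
    ∃ t', W = XT.app (XT.var f) t' ∧ XT.interp g t' = τ := by
  cases W with
  | var i => simp [XT.interp] at hterm
  | const m =>
    exact absurd (show Term.FreeIn f (g m) by
      rw [show XT.interp g (XT.const m) = g m from rfl] at hterm
      rw [hterm]; exact Or.inl rfl) ((hgc m) f)
  | lam w => simp [XT.interp] at hterm
  | cconst l a b cs =>
    exact absurd (show Term.FreeIn f (g l) by
      rw [show XT.interp g (XT.cconst l a b cs) = g l from rfl] at hterm
      rw [hterm]; exact Or.inl rfl) ((hgc l) f)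
  | app W₁ W₂ =>
    injection hterm with h1 h2
    cases W₁ with
    | var i =>
      have : i = f := by injection h1
      exact ⟨W₂, by rw [this], h2⟩
    | const m =>
      exact absurd (show Term.FreeIn f (g m) by
        rw [show XT.interp g (XT.const m) = g m from rfl] at h1
        rw [h1]; exact rfl) ((hgc m) f)
    | lam w => simp [XT.interp] at h1
    | app a b => simp [XT.interp] at h1
    | cconst l a b cs =>
      exact absurd (show Term.FreeIn f (g l) by
        rw [show XT.interp g (XT.cconst l a b cs) = g l from rfl] at h1
        rw [h1]; exact rfl) ((hgc l) f)

theorem emit_step {g : ℕ → Term} (hgc : ∀ l, Term.Closed (g l)) {X : XT}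
    (hX : (∃ i, XT.lhead X = XT.var i) ∨ (∃ u, XT.lhead X = XT.lam u))
    {a b : XT} {cs' : List XT} {s' : Term}
    (hstep : Term.HeadStep (XT.interp g (XT.spine (XT.app (XT.app X a) b) cs')) s') :
    ∃ U₂', XT.HeadStep (XT.spine (XT.app (XT.app X a) b) cs') U₂' ∧ XT.interp g U₂' = s' := by
  rcases revsim hgc _ s' hstep with ok | ⟨w, hw⟩ | ⟨h₃, cs₃, heq₃, hcase₃⟩
  · exact ok
  · obtain ⟨p, q, hpq⟩ := spine_app_ex cs' (XT.app X a) b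
    rw [hw] at hpq
    exact XT.noConfusion hpq
  · exfalso
    have h1 : XT.lhead (XT.spine (XT.app (XT.app X a) b) cs') = XT.lhead h₃ := by
      rw [heq₃, lhead_spine]
    rw [lhead_spine] at h1
    have h2 : XT.lhead X = XT.lhead h₃ := h1
    rcases hcase₃ with ⟨m₃, rfl⟩ | ⟨l₃, a₃, b₃, c₃, rfl⟩ <;>
      rcases hX with ⟨i, hXh⟩ | ⟨u, hXh⟩ <;> rw [hXh] at h2 <;>
      simp [XT.lhead] at h2

theorem lhead_emit0 : (∃ i, XT.lhead (church 0).toXT = XT.var i) ∨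
    (∃ u, XT.lhead (church 0).toXT = XT.lam u) := lhead_toXT (church 0)

theorem lhead_emitS (S : Term) (c : XT) :
    (∃ i, XT.lhead (XT.app S.toXT c) = XT.var i) ∨
    (∃ u, XT.lhead (XT.app S.toXT c) = XT.lam u) := by
  have := lhead_toXT S
  simpa [XT.lhead] using this

theorem emit_core (S : Term) {g : ℕ → Term} (hgc : ∀ l, Term.Closed (g l))
    (hg0 : g 0 = church 0) (hgS : ∀ m, g (m + 1) = Term.app S (g m))
    {n lvl : ℕ} (hlvl : lvl ≤ n) {h a b : XT} {cs' : List XT}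
    (hint : XT.interp g h = g lvl) (OKa : XT.OKc n a) (OKb : XT.OKc n b)
    (OKcs' : XT.OKcL n cs') {s' : Term}
    (hstep : Term.HeadStep (XT.interp g (XT.spine h (a :: b :: cs'))) s') :
    ∃ U₂ U₂', (lvl = 0 → U₂ = XT.spine (XT.app (XT.app (church 0).toXT a) b) cs') ∧
      (∀ m, lvl = m + 1 →
        U₂ = XT.spine (XT.app (XT.app (XT.app S.toXT (XT.cconst m a b cs')) a) b) cs') ∧
      XT.HeadStep U₂ U₂' ∧ XT.interp g U₂' = s' ∧ XT.OKc n U₂' := by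
  have hWint : XT.interp g (XT.spine h (a :: b :: cs')) =
      (cs'.map (XT.interp g)).foldl Term.app
        (Term.app (Term.app (g lvl) (XT.interp g a)) (XT.interp g b)) := by
    rw [spine_cons, spine_cons, interp_spine]
    simp [XT.interp, hint]
  cases lvl with
  | zero =>
    refine ⟨XT.spine (XT.app (XT.app (church 0).toXT a) b) cs', ?_⟩
    have hglue : XT.interp g (XT.spine (XT.app (XT.app (church 0).toXT a) b) cs') =
        XT.interp g (XT.spine h (a :: b :: cs')) := by
      rw [hWint, interp_spine]
      simp only [XT.interp, interp_toXT, hg0, List.map]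
    obtain ⟨U₂', hs₂, heq₂⟩ := emit_step hgc lhead_emit0 (by rw [hglue]; exact hstep)
    refine ⟨U₂', fun _ => rfl, fun m hm => by omega, hs₂, heq₂, ?_⟩
    refine okc_headStep hs₂ ((okc_spine cs' _).mpr ⟨⟨⟨okc_toXT n _, OKa⟩, OKb⟩, OKcs'⟩)
  | succ m =>
    refine ⟨XT.spine (XT.app (XT.app (XT.app S.toXT (XT.cconst m a b cs')) a) b) cs', ?_⟩
    have hglue : XT.interp g
        (XT.spine (XT.app (XT.app (XT.app S.toXT (XT.cconst m a b cs')) a) b) cs') =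
        XT.interp g (XT.spine h (a :: b :: cs')) := by
      rw [hWint, interp_spine]
      simp only [XT.interp, interp_toXT, hgS m, List.map]
    obtain ⟨U₂', hs₂, heq₂⟩ := emit_step hgc (lhead_emitS S _) (by rw [hglue]; exact hstep)
    refine ⟨U₂', fun h0 => by omega, fun m' hm' => by rw [show m' = m by omega], hs₂, heq₂, ?_⟩
    refine okc_headStep hs₂ ((okc_spine cs' _).mpr ⟨⟨⟨⟨okc_toXT n _, ?_⟩, OKa⟩, OKb⟩, OKcs'⟩)
    exact ⟨by omega, OKa, OKb, OKcs'⟩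

theorem run (S : Term) (hS : IsSuccessor S) (n f : ℕ) (τ : Term) :
    ∀ k (W : XT), XT.OKc n W →
      Term.HRN k (XT.interp (gchain S (church 0)) W) (Term.app (Term.var f) τ) →
      ∃ t', XT.Ch S.toXT n f W t' ∧ XT.interp (gchain S (church 0)) t' = τ := by
  have hgc : ∀ l, Term.Closed (gchain S (church 0) l) :=
    gchain_closed hS.1 (closed_church 0)
  have hgb : ∀ l, BetaEq (gchain S (church 0) l) (church l) :=
    gchain_betaEq hS BetaEq.rfl
  intro k
  induction k using Nat.strong_induction_on with
  | _ k ih =>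
  intro W hOK hk
  by_cases hterm : XT.interp (gchain S (church 0)) W = Term.app (Term.var f) τ
  · obtain ⟨t', rfl, hτ⟩ := terminal_case hgc hterm
    exact ⟨t', Ch.done _ _ Relation.ReflTransGen.refl, hτ⟩
  · rcases HRN.cases' hk with ⟨-, heqz⟩ | ⟨k', s', rfl, hstep, htail⟩
    · exact absurd heqz hterm
    · have hklt : k' < k' + 1 := by omega
      rcases revsim hgc W s' hstep with ⟨W', hsX, heq⟩ | ⟨w, rfl⟩ | ⟨h, cs, rfl, hcase⟩
      · obtain ⟨t', hch, hτ⟩ := ih k' hklt W' (okc_headStep hsX hOK) (by rw [heq]; exact htail)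
        exact ⟨t', hch.prepend hsX, hτ⟩
      · exfalso
        have hred : Term.HeadRed (Term.lam (XT.interp (gchain S (church 0)) w))
            (Term.app (Term.var f) τ) := (HRN.head hstep htail).headRed
        obtain ⟨t'', ht⟩ := HeadRed.of_lam hred
        exact Term.noConfusion ht
      · have hOKs := (okc_spine cs h).mp hOK
        have hredW : Term.HeadRed (XT.interp (gchain S (church 0)) (XT.spine h cs))
            (Term.app (Term.var f) τ) := (HRN.head hstep htail).headRed
        rcases hcase with ⟨m, rfl⟩ | ⟨l, a₀, b₀, c₀, rfl⟩
        · -- head is the plain constant Xₙ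
          have hm : m = n := hOKs.1
          subst hm
          match cs, hOKs, hstep, hredW with
          | [], _, hstep, hredW =>
            exact absurd hredW (not_headRed_zero (hgb m))
          | [a], _, hstep, hredW =>
            rw [spine_cons, spine_nil] at hredW
            exact absurd hredW (not_headRed_one (hgb m))
          | a :: b :: cs', hOKs, hstep, hredW =>
            obtain ⟨U₂, U₂', h0, hsuc, hs₂, heq₂, hOK₂⟩ :=
              emit_core S (h := XT.const m) hgc rfl (fun _ => rfl) (le_refl m) rfl
                hOKs.2.1 hOKs.2.2.1 hOKs.2.2.2 hstep
            obtain ⟨t', hch, hτ⟩ := ih k' hklt U₂' hOK₂ (by rw [heq₂]; exact htail)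
            refine ⟨t', ?_, hτ⟩
            exact Ch.stepN _ a b cs' U₂ t' Relation.ReflTransGen.refl h0 hsuc
              (hch.prepend hs₂)
        · -- head is a created constant X_{l,a₀,b₀,c₀}
          have hl : l < n := hOKs.1.1
          match cs, hOKs, hstep, hredW with
          | [], _, hstep, hredW =>
            exact absurd hredW (not_headRed_zero (hgb l))
          | [a], _, hstep, hredW =>
            rw [spine_cons, spine_nil] at hredW
            exact absurd hredW (not_headRed_one (hgb l))
          | a :: b :: cs', hOKs, hstep, hredW =>
            obtain ⟨U₂, U₂', h0, hsuc, hs₂, heq₂, hOK₂⟩ :=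
              emit_core S (h := XT.cconst l a₀ b₀ c₀) hgc rfl (fun _ => rfl) (le_of_lt hl) rfl
                hOKs.2.1 hOKs.2.2.1 hOKs.2.2.2 hstep
            obtain ⟨t', hch, hτ⟩ := ih k' hklt U₂' hOK₂ (by rw [heq₂]; exact htail)
            refine ⟨t', ?_, hτ⟩
            exact Ch.stepC _ l a₀ b₀ c₀ a b cs' U₂ t' hl Relation.ReflTransGen.refl h0 hsuc
              (hch.prepend hs₂)

end SO

open SO Term

/-- Theorem 1 : if `T` is a storage operator, then for every successor `S`,
`T` is an `S`-storage operator. -/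
theorem isSStorageOp_of_isStorageOp (T : SO.Term) (hT : IsStorageOp T)
    (S : SO.Term) (hS : IsSuccessor S) : SO.IsSStorageOp S T := by
  refine ⟨hT.1, ?_⟩
  intro n f
  obtain ⟨τ, hτc, hτe, hτred⟩ := hT.2 n
  -- the second base point for the interpretation of constants
  set b₂ : Term := Term.app (Term.lam (Term.var 0)) (church 0) with hb₂
  have hb₂c : Closed b₂ := by
    intro k hk
    rcases hk with hk | hk
    · simp [Term.FreeIn] at hk
    · exact closed_church 0 k hk
  have hb₂e : BetaEq b₂ (church 0) := by
    have h : Beta b₂ (Term.subst 0 (church 0) (Term.var 0)) := Beta.beta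
    simpa [Term.subst, BetaEq] using Relation.EqvGen.rel _ _ h
  have hg1c : ∀ l, Closed (gchain S (church 0) l) := gchain_closed hS.1 (closed_church 0)
  have hg2c : ∀ l, Closed (gchain S b₂ l) := gchain_closed hS.1 hb₂c
  -- the λX-term we start from
  set W₀ : XT := XT.app (XT.app T.toXT (XT.const n)) (XT.var f) with hW₀def
  have hOK0 : XT.OKc n W₀ := ⟨⟨okc_toXT n T, rfl⟩, trivial⟩
  -- head reduction of the first interpretation
  have hred1 : Term.HeadRed (Term.app (Term.app T (gchain S (church 0) n)) (Term.var f))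
      (Term.app (Term.var f) τ) :=
    hτred (gchain S (church 0) n) f (gchain_betaEq hS BetaEq.rfl n) (fun hf => (hg1c n) f hf)
  have hW0int : XT.interp (gchain S (church 0)) W₀ =
      Term.app (Term.app T (gchain S (church 0) n)) (Term.var f) := by
    simp [XT.interp, interp_toXT, hW₀def]
  obtain ⟨k, hk⟩ := hred1.hrn
  obtain ⟨t', hch, hτ1⟩ := run S hS n f τ k W₀ hOK0 (by rw [hW0int]; exact hk)
  -- second interpretation pass
  have hg0₂ : ∀ (u v : Term) (ws : List Term),
      Term.HeadRed (ws.foldl Term.app (Term.app (Term.app (gchain S b₂ 0) u) v))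
        (ws.foldl Term.app (Term.app (Term.app (church 0) u) v)) := by
    intro u v ws
    have h0 : Term.HeadStep b₂ (church 0) := by
      have h := @Term.HeadStep.beta (Term.var 0) (church 0)
      simpa [Term.subst] using h
    exact Term.headRed_foldl ws (Term.HeadStep.app (Term.HeadStep.app h0))
  have hr2 : Term.HeadRed (XT.interp (gchain S b₂) W₀)
      (Term.app (Term.var f) (XT.interp (gchain S b₂) t')) :=
    XT.Ch.interp_red hg2c (fun m => rfl) hg0₂ hch
  have hW0int2 : XT.interp (gchain S b₂) W₀ =
      Term.app (Term.app T (gchain S b₂ n)) (Term.var f) := by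
    simp [XT.interp, interp_toXT, hW₀def]
  have hred2 : Term.HeadRed (Term.app (Term.app T (gchain S b₂ n)) (Term.var f))
      (Term.app (Term.var f) τ) :=
    hτred (gchain S b₂ n) f (gchain_betaEq hS hb₂e n) (fun hf => (hg2c n) f hf)
  rw [hW0int2] at hr2
  have huniq := HeadRed.hnf_unique hr2 hred2 (IsHNF.fapp f _) (IsHNF.fapp f _)
  have hτ2 : XT.interp (gchain S b₂) t' = τ := by injection huniq
  -- the two interpretations agree on t', hence t' is constant-free
  have hne : ∀ l, gchain S (church 0) l ≠ gchain S b₂ l :=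
    gchain_ne (by intro h; exact Term.noConfusion h)
  obtain ⟨τ', hτ'⟩ := XT.eq_toXT_of_interp_eq hne t' (hτ1.trans hτ2.symm)
  have hττ : τ' = τ := by
    rw [hτ', interp_toXT] at hτ1
    exact hτ1
  subst hττ
  obtain ⟨r, U, V, hr, hU1, hVr, hhr, hsh⟩ := XT.Ch.toIndexed hch
  exact ⟨r, U, V, τ', hr, hτc, hτe, hU1, by rw [hVr, hτ'], hhr, hsh⟩
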